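/- Let X be a Banach space and F ∈ 𝓕_X. Assume a linear operator Z on X has domain D(Z) ⊆ D(F'(0)) and Zf = F'(0)f for all f ∈ D(Z). Then Z is closable: whenever f_n ∈ D(Z), f_n → 0 in X and Z f_n → h in X, then h = 0. -/

import Mathlib

open Filter Topology MeasureTheory

noncomputable section

variable {X : Type*} [NormedAddCommGroup X] [NormedSpace ℝ X] [CompleteSpace X]

/-- `y` is the value of the strong derivative at `0` of `F : [0,∞) → L(X)` at `ψ`. -/
def DerivAtZero (F : ℝ → (X →L[ℝ] X)) (ψ y : X) : Prop :=
  Tendsto (fun h : ℝ => h⁻¹ • (F h ψ - F 0 ψ)) (𝓝[>] (0 : ℝ)) (𝓝 y)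

/-- The class `𝓕^X_{M,a}`. -/
def MemFClass (F : ℝ → (X →L[ℝ] X)) (M a : ℝ) : Prop :=
  F 0 = 1 ∧
    (∀ n m : ℕ, 0 < n → 0 < m → ∀ s : ℝ, 0 ≤ s →
      ‖(F (s / n)) ^ m‖ ≤ M * Real.exp (a * m * s / n)) ∧
    Dense {ψ : X | ∃ y, DerivAtZero F ψ y}

/-- The class `𝓕_X`. -/
def MemF (F : ℝ → (X →L[ℝ] X)) : Prop := ∃ M, 1 ≤ M ∧ ∃ a : ℝ, MemFClass F M a

/-- The adjoint of a bounded operator, acting on the dual space. -/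
noncomputable def adjCLM (T : X →L[ℝ] X) :
    StrongDual ℝ X →L[ℝ] StrongDual ℝ X :=
  LinearMap.mkContinuous
    { toFun := fun φ => φ.comp T
      map_add' := fun φ ψ => by ext x; simp
      map_smul' := fun c φ => by ext x; simp }
    ‖T‖ (fun φ => by simpa [mul_comm] using φ.opNorm_comp_le T)

/-- `ψ` is the value at `φ` of the strong derivative at `0` of `s ↦ F(s)*`. -/
def AdjDerivAtZero (F : ℝ → (X →L[ℝ] X)) (φ ψ : StrongDual ℝ X) : Prop :=
  Tendsto (fun h : ℝ => h⁻¹ • (adjCLM (F h) φ - adjCLM (F 0) φ)) (𝓝[>] (0 : ℝ)) (𝓝 ψ)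

/-- A `C₀`-semigroup on `X` (as a function on `[0,∞)`, modelled on all of `ℝ`). -/
def IsC0Semigroup (S : ℝ → (X →L[ℝ] X)) : Prop :=
  S 0 = 1 ∧ (∀ a b : ℝ, 0 ≤ a → 0 ≤ b → S (a + b) = S a * S b) ∧
    (∀ x : X, ContinuousOn (fun s => S s x) (Set.Ici (0 : ℝ))) ∧
    ∃ M, 1 ≤ M ∧ ∃ w : ℝ, ∀ s : ℝ, 0 ≤ s → ‖S s‖ ≤ M * Real.exp (w * s)

/-- `Z` is the generator of the semigroup `S`: the strong derivative of `S` at `0`,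
with its maximal domain, coincides with `Z`. -/
def IsGeneratorOf (S : ℝ → (X →L[ℝ] X)) (Z : X →ₗ.[ℝ] X) : Prop :=
  ∀ x y : X, DerivAtZero S x y ↔ ∃ hx : x ∈ Z.domain, Z ⟨x, hx⟩ = y

/-- Every subsequence of `u` has a weakly convergent subsubsequence. -/
def WeakSubCvg (u : ℕ → X) : Prop :=
  ∀ k : ℕ → ℕ, StrictMono k → ∃ j : ℕ → ℕ, StrictMono j ∧ ∃ L : X,
    ∀ φ : StrongDual ℝ X, Tendsto (fun i => φ (u (k (j i)))) atTop (𝓝 (φ L))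

/-- `(f, y)` belongs to the closure of the graph of `F'(0)`. -/
def InClosureGraphF (F : ℝ → (X →L[ℝ] X)) (f y : X) : Prop :=
  (f, y) ∈ closure {p : X × X | DerivAtZero F p.1 p.2}

/-!
Average the powers of `F` at step `s = t/k`: `A = s ∑_{j<k} F(s)^j` satisfies
`A · s⁻¹(F(s) - 1) = F(s)^k - 1`, and the bound defining the class gives `‖A‖ ≤ C t` with
`C = M e^{|a| t}` uniformly in `k`, as well as `‖t ψ - A ψ‖ ≤ C t² ‖s⁻¹(F(s)ψ - ψ)‖`.
Comparing `t ψ` with `A ψ`, `A (ψ - Z f_n)` and `A` applied to the difference quotient of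
`f_n`, then letting `k → ∞` and `n → ∞`, gives `‖ψ‖ ≤ C (t ‖F'(0)ψ‖ + ‖ψ - h‖)` for every
`ψ ∈ D(F'(0))`; as `t → 0` this is `‖ψ‖ ≤ M ‖ψ - h‖`, which extends by density to `ψ = h`.
-/

namespace ContinuousLinearMap

open Finset

section

variable {𝕜 E : Type*} [NontriviallyNormedField 𝕜] [NormedAddCommGroup E] [NormedSpace 𝕜 E]
  {T : E →L[𝕜] E} {C : ℝ} {k : ℕ}

theorem geom_sum_apply_sub_self (T : E →L[𝕜] E) (k : ℕ) (x : E) :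
    (∑ j ∈ range k, T ^ j) (T x - x) = (T ^ k) x - x := by
  simpa using congrArg (· x) (geom_sum_mul T k)

theorem norm_geom_sum_le (hT : ∀ j < k, ‖T ^ j‖ ≤ C) : ‖∑ j ∈ range k, T ^ j‖ ≤ k * C := by
  calc ‖∑ j ∈ range k, T ^ j‖ ≤ ∑ j ∈ range k, ‖T ^ j‖ := norm_sum_le _ _
    _ ≤ ∑ _j ∈ range k, C := sum_le_sum fun j hj => hT j (mem_range.1 hj)
    _ = k * C := by simp

theorem norm_pow_apply_sub_self_le (hT : ∀ j < k, ‖T ^ j‖ ≤ C) (x : E) :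
    ‖(T ^ k) x - x‖ ≤ k * C * ‖T x - x‖ := by
  rw [← geom_sum_apply_sub_self]
  exact le_of_opNorm_le _ (norm_geom_sum_le hT) _

theorem norm_nsmul_sub_geom_sum_apply_le (hC : 0 ≤ C) (hT : ∀ j < k, ‖T ^ j‖ ≤ C) (x : E) :
    ‖k • x - (∑ j ∈ range k, T ^ j) x‖ ≤ k * (k * C * ‖T x - x‖) := by
  have hsum : k • x - (∑ j ∈ range k, T ^ j) x = ∑ j ∈ range k, (x - (T ^ j) x) := by
    simp [sum_sub_distrib]
  have hterm : ∀ j ∈ range k, ‖x - (T ^ j) x‖ ≤ k * C * ‖T x - x‖ := fun j hj => by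
    have hjk : j < k := mem_range.1 hj
    rw [norm_sub_rev]
    refine (norm_pow_apply_sub_self_le (fun i hi => hT i (hi.trans hjk)) x).trans ?_
    gcongr
  rw [hsum]
  refine (norm_sum_le _ _).trans ?_
  simpa using sum_le_card_nsmul _ _ _ hterm

end

section

variable {E : Type*} [NormedAddCommGroup E] [NormedSpace ℝ E] {T : E →L[ℝ] E} {C : ℝ} {k : ℕ}

theorem norm_smul_geom_sum_apply_le (hT : ∀ j < k, ‖T ^ j‖ ≤ C) {s : ℝ} (hs : 0 < s) (v : E) :
    ‖s • (∑ j ∈ range k, T ^ j) v‖ ≤ C * (k * s) * ‖v‖ := by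
  rw [norm_smul, Real.norm_of_nonneg hs.le]
  calc s * ‖(∑ j ∈ range k, T ^ j) v‖ ≤ s * (k * C * ‖v‖) :=
        mul_le_mul_of_nonneg_left (le_of_opNorm_le _ (norm_geom_sum_le hT) v) hs.le
    _ = C * (k * s) * ‖v‖ := by ring

theorem mul_norm_le_of_norm_pow_le (hC : 0 ≤ C) (hT : ∀ j ≤ k, ‖T ^ j‖ ≤ C) {s : ℝ} (hs : 0 < s)
    (ψ z g : E) :
    (k * s) * ‖ψ‖ ≤ C * (k * s) ^ 2 * ‖s⁻¹ • (T ψ - ψ)‖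
      + C * (k * s) * (‖ψ - z‖ + ‖z - s⁻¹ • (T g - g)‖) + (C + 1) * ‖g‖ := by
  set S := ∑ j ∈ range k, T ^ j
  have hT' : ∀ j < k, ‖T ^ j‖ ≤ C := fun j hj => hT j hj.le
  have hAD : s • S (s⁻¹ • (T g - g)) = (T ^ k) g - g := by
    rw [map_smul, smul_inv_smul₀ hs.ne', geom_sum_apply_sub_self]
  -- With `A = s ∑_{j<k} T^j` and `D = s⁻¹ (T - 1)`, so that `A D = T^k - 1`:
  -- `k s ψ = (k s ψ - A ψ) + A (ψ - z) + A (z - D g) + A D g`.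
  have hsplit : (k * s) • ψ = s • (k • ψ - S ψ) + s • S (ψ - z)
      + s • S (z - s⁻¹ • (T g - g)) + ((T ^ k) g - g) := by
    rw [← hAD, mul_comm, mul_smul, Nat.cast_smul_eq_nsmul]
    simp only [map_sub, smul_sub]
    abel
  have hψ : ‖s • (k • ψ - S ψ)‖ ≤ C * (k * s) ^ 2 * ‖s⁻¹ • (T ψ - ψ)‖ := by
    rw [norm_smul, norm_smul, Real.norm_of_nonneg hs.le, norm_inv, Real.norm_of_nonneg hs.le]
    calc s * ‖k • ψ - S ψ‖ ≤ s * (k * (k * C * ‖T ψ - ψ‖)) :=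
          mul_le_mul_of_nonneg_left (norm_nsmul_sub_geom_sum_apply_le hC hT' ψ) hs.le
      _ = C * (k * s) ^ 2 * (s⁻¹ * ‖T ψ - ψ‖) := by field_simp
  have hg : ‖(T ^ k) g - g‖ ≤ (C + 1) * ‖g‖ := by
    calc ‖(T ^ k) g - g‖ ≤ ‖(T ^ k) g‖ + ‖g‖ := norm_sub_le _ _
      _ ≤ C * ‖g‖ + ‖g‖ := by
        gcongr; exact le_of_opNorm_le _ (hT k le_rfl) g
      _ = (C + 1) * ‖g‖ := by ring
  have hks : 0 ≤ k * s := by positivity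
  calc (k * s) * ‖ψ‖ = ‖(k * s) • ψ‖ := by rw [norm_smul, Real.norm_of_nonneg hks]
    _ ≤ ‖s • (k • ψ - S ψ)‖ + ‖s • S (ψ - z)‖ + ‖s • S (z - s⁻¹ • (T g - g))‖
        + ‖(T ^ k) g - g‖ := by rw [hsplit]; exact norm_add₄_le
    _ ≤ _ := by
      have := norm_smul_geom_sum_apply_le hT' hs (ψ - z)
      have := norm_smul_geom_sum_apply_le hT' hs (z - s⁻¹ • (T g - g))
      linarith

end

end ContinuousLinearMap

section ChernoffClass

variable {E : Type*} [NormedAddCommGroup E] [NormedSpace ℝ E] {F : ℝ → (E →L[ℝ] E)} {M a : ℝ}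

theorem DerivAtZero.tendsto_div_natCast (hF0 : F 0 = 1) {ψ y : E} (hψ : DerivAtZero F ψ y)
    {t : ℝ} (ht : 0 < t) :
    Tendsto (fun k : ℕ => (t / k)⁻¹ • (F (t / k) ψ - ψ)) atTop (𝓝 y) := by
  have hdiv : Tendsto (fun k : ℕ => t / k) atTop (𝓝[>] 0) :=
    tendsto_nhdsWithin_of_tendsto_nhds_of_eventually_within _
      (tendsto_const_div_atTop_nhds_zero_nat t)
      (eventually_gt_atTop 0 |>.mono fun k hk => div_pos ht (Nat.cast_pos.2 hk))
  simpa only [Function.comp_def, hF0, one_apply_eq_self] using hψ.comp hdiv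

theorem MemFClass.norm_pow_le (hF : MemFClass F M a) (hM : 1 ≤ M) {t : ℝ} (ht : 0 ≤ t)
    {k j : ℕ} (hj : j ≤ k) : ‖F (t / k) ^ j‖ ≤ M * Real.exp (|a| * t) := by
  have hone : 1 ≤ M * Real.exp (|a| * t) := one_le_mul_of_one_le_of_one_le hM
    (Real.one_le_exp (by positivity))
  rcases Nat.eq_zero_or_pos j with rfl | hj0
  · rw [pow_zero]
    exact ContinuousLinearMap.norm_id_le.trans hone
  have hk : 0 < k := hj0.trans_le hj
  refine (hF.2.1 k j hk hj0 t ht).trans (mul_le_mul_of_nonneg_left (Real.exp_le_exp.2 ?_)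
    (by linarith))
  have hjk : (j : ℝ) ≤ k := Nat.cast_le.2 hj
  rw [div_le_iff₀ (Nat.cast_pos.2 hk)]
  calc a * j * t ≤ |a| * j * t := by gcongr; exact le_abs_self a
    _ ≤ |a| * t * k := by rw [mul_right_comm]; gcongr

theorem MemFClass.mul_norm_le (hF : MemFClass F M a) (hM : 1 ≤ M) {ψ y g z : E}
    (hψ : DerivAtZero F ψ y) (hg : DerivAtZero F g z) {t : ℝ} (ht : 0 < t) :
    t * ‖ψ‖ ≤ M * Real.exp (|a| * t) * t ^ 2 * ‖y‖ + M * Real.exp (|a| * t) * t * ‖ψ - z‖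
      + (M * Real.exp (|a| * t) + 1) * ‖g‖ := by
  set C := M * Real.exp (|a| * t)
  have hC : 0 ≤ C := by positivity
  have hlim : Tendsto (fun k : ℕ => C * t ^ 2 * ‖(t / k)⁻¹ • (F (t / k) ψ - ψ)‖
      + C * t * (‖ψ - z‖ + ‖z - (t / k)⁻¹ • (F (t / k) g - g)‖) + (C + 1) * ‖g‖) atTop
      (𝓝 (C * t ^ 2 * ‖y‖ + C * t * ‖ψ - z‖ + (C + 1) * ‖g‖)) := by
    have hψk := (hψ.tendsto_div_natCast hF.1 ht).norm.const_mul (C * t ^ 2)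
    have hgk := ((hg.tendsto_div_natCast hF.1 ht).const_sub z).norm.const_add ‖ψ - z‖
    simpa using (hψk.add (hgk.const_mul (C * t))).add_const ((C + 1) * ‖g‖)
  refine ge_of_tendsto hlim ((eventually_gt_atTop 0).mono fun k hk => ?_)
  have hkt : (k : ℝ) * (t / k) = t := mul_div_cancel₀ t (Nat.cast_pos.2 hk).ne'
  have := ContinuousLinearMap.mul_norm_le_of_norm_pow_le (k := k) hC
    (fun j hj => hF.norm_pow_le hM ht.le hj) (div_pos ht (Nat.cast_pos.2 hk)) ψ z g
  rwa [hkt] at this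

theorem MemFClass.norm_le_of_tendsto_graph (hF : MemFClass F M a) (hM : 1 ≤ M) {ψ y h : E}
    (hψ : DerivAtZero F ψ y) {g z : ℕ → E} (hgz : ∀ n, DerivAtZero F (g n) (z n))
    (hg : Tendsto g atTop (𝓝 0)) (hz : Tendsto z atTop (𝓝 h)) :
    ‖ψ‖ ≤ M * ‖ψ - h‖ := by
  have hbound : ∀ t > 0, ‖ψ‖ ≤ M * Real.exp (|a| * t) * (t * ‖y‖ + ‖ψ - h‖) := by
    intro t ht
    set C := M * Real.exp (|a| * t)
    have hlim : Tendsto (fun n => C * t ^ 2 * ‖y‖ + C * t * ‖ψ - z n‖ + (C + 1) * ‖g n‖) atTop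
        (𝓝 (C * t ^ 2 * ‖y‖ + C * t * ‖ψ - h‖)) := by
      simpa using (((hz.const_sub ψ).norm.const_mul (C * t)).const_add (C * t ^ 2 * ‖y‖)).add
        (hg.norm.const_mul (C + 1))
    have := ge_of_tendsto hlim (Eventually.of_forall fun n => hF.mul_norm_le hM hψ (hgz n) ht)
    refine le_of_mul_le_mul_left ?_ ht
    linarith
  have hlim : Tendsto (fun t => M * Real.exp (|a| * t) * (t * ‖y‖ + ‖ψ - h‖)) (𝓝[>] 0)
      (𝓝 (M * ‖ψ - h‖)) := by
    have hcont : Continuous fun t => M * Real.exp (|a| * t) * (t * ‖y‖ + ‖ψ - h‖) := by fun_prop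
    simpa using (hcont.tendsto 0).mono_left nhdsWithin_le_nhds
  exact ge_of_tendsto hlim (eventually_nhdsWithin_of_forall hbound)

end ChernoffClass

theorem eq_zero_of_dense_norm_le {E : Type*} [NormedAddCommGroup E] {s : Set E} (hs : Dense s)
    {M : ℝ} {h : E} (hle : ∀ ψ ∈ s, ‖ψ‖ ≤ M * ‖ψ - h‖) : h = 0 := by
  have hclosed : IsClosed {ψ : E | ‖ψ‖ ≤ M * ‖ψ - h‖} := isClosed_le (by fun_prop) (by fun_prop)
  have hh : ‖h‖ ≤ M * ‖h - h‖ := closure_minimal hle hclosed (hs.closure_eq ▸ Set.mem_univ h)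
  simpa using hh

/-- Theorem 1: if `Z ⊆ F'(0)` for some `F ∈ 𝓕_X`, then `Z` is closable. -/
theorem chernoff_thm1 (F : ℝ → (X →L[ℝ] X)) (hF : MemF F)
    (Z : X →ₗ.[ℝ] X)
    (hZF : ∀ f : Z.domain, DerivAtZero F (f : X) (Z f))
    (f : ℕ → Z.domain) (h : X)
    (hf0 : Tendsto (fun n => (f n : X)) atTop (𝓝 (0 : X)))
    (hyh : Tendsto (fun n => Z (f n)) atTop (𝓝 h)) :
    h = 0 := by
  obtain ⟨M, hM, a, hF⟩ := hF
  exact eq_zero_of_dense_norm_le hF.2.2 fun ψ ⟨_, hψ⟩ =>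
    hF.norm_le_of_tendsto_graph hM hψ (fun n => hZF (f n)) hf0 hyh
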